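/- Let N be a network satisfying (PCC). Then N is an lca-network if and only if its clustering system 𝒞_N is closed. -/

import Mathlib

namespace PhyloNet

/-- A (rooted) network on a set `X` of taxa: a finite directed acyclic graph with a
unique vertex of indegree 0 (the root), whose vertices of outdegree 0 (the leaves)
are exactly the elements of `X` (via the injection `leafEmb`). -/
structure Network (X : Type) where
  V : Type
  [fintypeV : Fintype V]
  E : V → V → Prop
  leafEmb : X → V
  leafEmb_inj : Function.Injective leafEmb
  acyclic : ∀ u v : V, E u v → ¬ Relation.ReflTransGen E v u
  root_unique : ∃! r : V, ∀ u : V, ¬ E u r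
  leaf_iff : ∀ v : V, (∀ w : V, ¬ E v w) ↔ ∃ x : X, leafEmb x = v

attribute [instance] Network.fintypeV

variable {X : Type}

namespace Network

/-- `reach u v` : there is a directed path (possibly trivial) from `u` to `v`,
i.e. `v ⪯ u`. -/
def reach (N : Network X) : N.V → N.V → Prop := Relation.ReflTransGen N.E

/-- The cluster of a vertex: the set of leaves reachable from it. -/
def cluster (N : Network X) (v : N.V) : Set X := {x | N.reach v (N.leafEmb x)}

/-- The clustering system of a network. -/
def CS (N : Network X) : Set (Set X) := Set.range N.cluster

noncomputable def inDeg (N : Network X) (v : N.V) : ℕ := {u | N.E u v}.ncard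
noncomputable def outDeg (N : Network X) (v : N.V) : ℕ := {w | N.E v w}.ncard

def IsHybrid (N : Network X) (v : N.V) : Prop := 1 < N.inDeg v
def IsTreeVertex (N : Network X) (v : N.V) : Prop := N.inDeg v ≤ 1
def IsLeaf (N : Network X) (v : N.V) : Prop := ∀ w : N.V, ¬ N.E v w

/-- The arc `(u,w)` is a shortcut: `w ≺ v` for some child `v ≠ w` of `u`. -/
def IsShortcut (N : Network X) (u w : N.V) : Prop :=
  N.E u w ∧ ∃ v : N.V, N.E u v ∧ v ≠ w ∧ N.reach v w

def ShortcutFree (N : Network X) : Prop := ∀ u w : N.V, ¬ N.IsShortcut u w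

/-- Path-cluster comparability. -/
def PCC (N : Network X) : Prop :=
  ∀ u v : N.V, (N.reach u v ∨ N.reach v u) ↔
    (N.cluster u ⊆ N.cluster v ∨ N.cluster v ⊆ N.cluster u)

def SemiRegular (N : Network X) : Prop := N.ShortcutFree ∧ N.PCC

/-- `N` is regular iff `v ↦ C(v)` is a digraph isomorphism onto the Hasse diagram
of `𝒞_N` (ordered by inclusion). -/
def Regular (N : Network X) : Prop :=
  Function.Injective N.cluster ∧
  ∀ u v : N.V, N.E u v ↔
    (N.cluster v ⊂ N.cluster u ∧
      ¬ ∃ w : N.V, N.cluster v ⊂ N.cluster w ∧ N.cluster w ⊂ N.cluster u)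

def Separated (N : Network X) : Prop := ∀ v : N.V, N.IsHybrid v → N.outDeg v = 1

def Phylogenetic (N : Network X) : Prop := ¬ ∃ v : N.V, N.outDeg v = 1 ∧ N.inDeg v ≤ 1

def Binary (N : Network X) : Prop :=
  (∀ v : N.V, N.IsTreeVertex v → (N.IsLeaf v ∨ N.outDeg v = 2)) ∧
  (∀ v : N.V, N.IsHybrid v → N.inDeg v = 2 ∧ N.outDeg v = 1)

def TreeChild (N : Network X) : Prop :=
  ∀ v : N.V, ¬ N.IsLeaf v → ∃ u : N.V, N.E v u ∧ N.inDeg u = 1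

/-- The underlying undirected (simple) graph of a network. -/
def UG (N : Network X) : SimpleGraph N.V where
  Adj u v := u ≠ v ∧ (N.E u v ∨ N.E v u)
  symm := ⟨fun _ _ h => ⟨Ne.symm h.1, Or.symm h.2⟩⟩
  loopless := ⟨fun _ h => h.1 rfl⟩

/-- A set of vertices is biconnected if it induces a connected undirected graph
with no cutvertex. -/
def IsBiconn (N : Network X) (B : Set N.V) : Prop :=
  (N.UG.induce B).Connected ∧ ∀ v ∈ B, (N.UG.induce (B \ {v})).Preconnected

/-- A block: a maximal biconnected set of vertices. -/
def IsBlock (N : Network X) (B : Set N.V) : Prop :=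
  N.IsBiconn B ∧ ∀ B' : Set N.V, B ⊆ B' → N.IsBiconn B' → B' = B

/-- The set `B` contains an undirected cycle (`B` is a non-trivial block when it is
a block). -/
def HasCycleIn (N : Network X) (B : Set N.V) : Prop :=
  ∃ (v : N.V) (c : N.UG.Walk v v), c.IsCycle ∧ ∀ w ∈ c.support, w ∈ B

/-- Level-1: each block contains at most one hybrid vertex that is not
`⪯`-maximal in the block. -/
def Level1 (N : Network X) : Prop :=
  ∀ B : Set N.V, N.IsBlock B →
    Set.Subsingleton {v : N.V | v ∈ B ∧ N.IsHybrid v ∧ ∃ u ∈ B, u ≠ v ∧ N.reach u v}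

/-- The set `B` (with the edges of the underlying undirected graph between its
members) is exactly an undirected cycle. -/
def IsCycleSet (N : Network X) (B : Set N.V) : Prop :=
  ∃ (v : N.V) (c : N.UG.Walk v v), c.IsCycle ∧ (∀ w : N.V, w ∈ c.support ↔ w ∈ B) ∧
    ∀ u w : N.V, (N.UG.Adj u w ∧ u ∈ B ∧ w ∈ B) ↔ s(u, w) ∈ c.edges

/-- A galled tree: every non-trivial block is an undirected cycle. -/
def GalledTree (N : Network X) : Prop :=
  ∀ B : Set N.V, N.IsBlock B → N.HasCycleIn B → N.IsCycleSet B

/-- Quasi-binary: hybrid vertices have indegree 2 and outdegree 1, and the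
`⪯`-maximal vertex of every non-trivial block has outdegree 2. -/
def QuasiBinary (N : Network X) : Prop :=
  (∀ v : N.V, N.IsHybrid v → N.inDeg v = 2 ∧ N.outDeg v = 1) ∧
  ∀ B : Set N.V, N.IsBlock B → N.HasCycleIn B →
    ∀ v ∈ B, (∀ u ∈ B, N.reach u v → u = v) → N.outDeg v = 2

/-- `LCA A`: the `⪯`-minimal vertices among the common ancestors of `A`. -/
def LCA (N : Network X) (A : Set X) : Set N.V :=
  {v : N.V | A ⊆ N.cluster v ∧ ∀ u : N.V, A ⊆ N.cluster u → N.reach v u → u = v}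

/-- An lca-network: every nonempty set of leaves has a unique least common
ancestor. -/
def LcaNetwork (N : Network X) : Prop :=
  ∀ A : Set X, A.Nonempty → ∃ v : N.V, N.LCA A = {v}

/-- A strong lca-network. -/
def StrongLca (N : Network X) : Prop :=
  N.LcaNetwork ∧
  ∀ A : Set X, A.Nonempty → ∃ x ∈ A, ∃ y ∈ A, N.LCA ({x, y} : Set X) = N.LCA A

/-- Cluster networks in the sense of Huson & Rupp. -/
def ClusterNetwork (N : Network X) : Prop :=
  N.PCC ∧
  (∀ u v : N.V, N.cluster u = N.cluster v ↔
    (u = v ∨ (N.IsHybrid v ∧ N.E v u) ∨ (N.IsHybrid u ∧ N.E u v))) ∧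
  (∀ u v : N.V, N.E v u →
    ¬ ∃ w : N.V, N.cluster u ⊂ N.cluster w ∧ N.cluster w ⊂ N.cluster v) ∧
  (∀ v : N.V, N.IsHybrid v →
    ∃ u : N.V, N.E v u ∧ (∀ w : N.V, N.E v w → w = u) ∧ N.IsTreeVertex u)

/-- The multiplicity of a cluster in the cluster multiset `𝓜_N`. -/
noncomputable def multiplicity (N : Network X) (C : Set X) : ℕ :=
  Nat.card {v : N.V // N.cluster v = C}

/-- Isomorphism of networks on the same leaf set `X`, fixing every leaf. -/
def Isomorphic (N N' : Network X) : Prop :=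
  ∃ φ : N.V ≃ N'.V, (∀ u v : N.V, N.E u v ↔ N'.E (φ u) (φ v)) ∧
    ∀ x : X, φ (N.leafEmb x) = N'.leafEmb x

end Network

/-- A clustering system on `X`. -/
def IsClusteringSystem {X : Type} (𝒞 : Set (Set X)) : Prop :=
  ∅ ∉ 𝒞 ∧ Set.univ ∈ 𝒞 ∧ ∀ x : X, {x} ∈ 𝒞

/-- Two sets overlap if `A ∩ B ∉ {∅, A, B}`. -/
def Overlap {X : Type} (A B : Set X) : Prop :=
  (A ∩ B).Nonempty ∧ A ∩ B ≠ A ∧ A ∩ B ≠ B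

/-- Closed (under pairwise nonempty intersections). -/
def IsClosedCS {X : Type} (𝒞 : Set (Set X)) : Prop :=
  ∀ A ∈ 𝒞, ∀ B ∈ 𝒞, (A ∩ B).Nonempty → A ∩ B ∈ 𝒞

/-- Property (L). -/
def PropertyL {X : Type} (𝒞 : Set (Set X)) : Prop :=
  ∀ C₁ ∈ 𝒞, ∀ C₂ ∈ 𝒞, ∀ C₃ ∈ 𝒞, Overlap C₁ C₂ → Overlap C₁ C₃ → C₁ ∩ C₂ = C₁ ∩ C₃

/-- Weak hierarchy. -/
def WeakHierarchy {X : Type} (𝒞 : Set (Set X)) : Prop :=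
  ∀ C₁ ∈ 𝒞, ∀ C₂ ∈ 𝒞, ∀ C₃ ∈ 𝒞,
    C₁ ∩ C₂ ∩ C₃ = C₁ ∩ C₂ ∨ C₁ ∩ C₂ ∩ C₃ = C₁ ∩ C₃ ∨
    C₁ ∩ C₂ ∩ C₃ = C₂ ∩ C₃ ∨ C₁ ∩ C₂ ∩ C₃ = ∅

/-- Property (N3O): no three distinct pairwise overlapping clusters. -/
def N3O {X : Type} (𝒞 : Set (Set X)) : Prop :=
  ¬ ∃ C₁ ∈ 𝒞, ∃ C₂ ∈ 𝒞, ∃ C₃ ∈ 𝒞,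
    C₁ ≠ C₂ ∧ C₁ ≠ C₃ ∧ C₂ ≠ C₃ ∧ Overlap C₁ C₂ ∧ Overlap C₁ C₃ ∧ Overlap C₂ C₃

/-- Property (2-Inc). -/
def TwoInc {X : Type} (𝒞 : Set (Set X)) : Prop :=
  ∀ C ∈ 𝒞,
    {A : Set X | A ∈ 𝒞 ∧ A ⊂ C ∧ ∀ B ∈ 𝒞, B ⊂ C → A ⊆ B → A = B}.ncard ≤ 2 ∧
    {A : Set X | A ∈ 𝒞 ∧ C ⊂ A ∧ ∀ B ∈ 𝒞, C ⊂ B → B ⊆ A → A = B}.ncard ≤ 2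

/-- The intersection closure: all nonempty intersections of nonempty subfamilies. -/
def interClosure {X : Type} (𝒞 : Set (Set X)) : Set (Set X) :=
  {A : Set X | A.Nonempty ∧ ∃ S : Set (Set X), S ⊆ 𝒞 ∧ S.Nonempty ∧ A = ⋂₀ S}

/-!
Below any common ancestor of `A` lies a `⪯`-minimal one, and the root is a common
ancestor of every `A`, so `LCA A` is never empty; the question is uniqueness.
If `N` is an lca-network and `C(u) ∩ C(v) ≠ ∅`, the unique lca `w` of `C(u) ∩ C(v)` lies below
both `u` and `v`, so `C(w) = C(u) ∩ C(v)`. Conversely, if `𝒞_N` is closed and `a, b ∈ LCA A`,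
then `C(a) ∩ C(b) = C(z)` for some `z`. By (PCC), `z` is comparable with `a`, and minimality of
`a` forces `C(a) ⊆ C(z) ⊆ C(b)`; symmetrically for `b`, and then (PCC) together with minimality
gives `a = b`.
-/

namespace Network

open Relation

variable (N : Network X)

theorem not_transGen_self (v : N.V) : ¬ TransGen N.E v v := fun h =>
  let ⟨w, hvw, hwv⟩ := TransGen.head'_iff.mp h
  N.acyclic v w hvw hwv

instance : IsTrans N.V (TransGen N.E) := ⟨fun _ _ _ => TransGen.trans⟩

instance : Std.Irrefl (TransGen N.E) := ⟨N.not_transGen_self⟩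

theorem wellFounded_transGen : WellFounded (TransGen N.E) :=
  Finite.wellFounded_of_trans_of_irrefl _

theorem wellFounded_swap_transGen : WellFounded (Function.swap (TransGen N.E)) :=
  Finite.wellFounded_of_trans_of_irrefl _

variable {N}

theorem cluster_subset_of_reach {u v : N.V} (h : N.reach u v) : N.cluster v ⊆ N.cluster u :=
  fun _ hx => h.trans hx

variable (N)

theorem exists_reach_all : ∃ r : N.V, ∀ v : N.V, N.reach r v := by
  obtain ⟨r, -, hr⟩ := N.root_unique
  refine ⟨r, fun v => ?_⟩
  obtain ⟨u, huv, hmin⟩ := N.wellFounded_transGen.has_min {u | N.reach u v} ⟨v, .refl⟩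
  have hu_root : ∀ p : N.V, ¬ N.E p u := fun p hpu =>
    hmin p (ReflTransGen.head hpu huv) (.single hpu)
  exact hr u hu_root ▸ huv

theorem exists_mem_LCA_reach {A : Set X} {u : N.V} (hu : A ⊆ N.cluster u) :
    ∃ m ∈ N.LCA A, N.reach u m := by
  obtain ⟨m, ⟨hum, hAm⟩, hmin⟩ :=
    N.wellFounded_swap_transGen.has_min {z | N.reach u z ∧ A ⊆ N.cluster z} ⟨u, .refl, hu⟩
  refine ⟨m, ⟨hAm, fun z hAz hmz => ?_⟩, hum⟩
  rcases reflTransGen_iff_eq_or_transGen.mp hmz with rfl | h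
  · rfl
  · exact absurd h (hmin z ⟨hum.trans hmz, hAz⟩)

theorem LCA_nonempty (A : Set X) : (N.LCA A).Nonempty :=
  let ⟨r, hr⟩ := N.exists_reach_all
  let ⟨m, hm, _⟩ := N.exists_mem_LCA_reach (u := r) fun _ _ => hr _
  ⟨m, hm⟩

variable {N}

theorem LcaNetwork.isClosedCS (h : N.LcaNetwork) : IsClosedCS N.CS := by
  rintro _ ⟨u, rfl⟩ _ ⟨v, rfl⟩ huv
  obtain ⟨w, hw⟩ := h _ huv
  obtain ⟨m, hm, hum⟩ := N.exists_mem_LCA_reach (Set.inter_subset_left (t := N.cluster v))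
  obtain ⟨m', hm', hvm'⟩ := N.exists_mem_LCA_reach (Set.inter_subset_right (s := N.cluster u))
  have hw_mem : w ∈ N.LCA _ := hw ▸ Set.mem_singleton w
  rw [hw, Set.mem_singleton_iff] at hm hm'
  rw [hm] at hum
  rw [hm'] at hvm'
  exact ⟨w, (Set.subset_inter (cluster_subset_of_reach hum)
    (cluster_subset_of_reach hvm')).antisymm hw_mem.1⟩

namespace PCC

variable {A : Set X} {a b : N.V}

theorem eq_of_mem_LCA_of_cluster_subset (hPCC : N.PCC) (ha : a ∈ N.LCA A) (hb : b ∈ N.LCA A)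
    (hab : N.cluster a ⊆ N.cluster b) : a = b := by
  rcases (hPCC a b).mpr (.inl hab) with h | h
  · exact (ha.2 b hb.1 h).symm
  · exact hb.2 a ha.1 h

theorem cluster_subset_of_mem_LCA (hPCC : N.PCC) (hC : IsClosedCS N.CS) (ha : a ∈ N.LCA A)
    (hb : b ∈ N.LCA A) (hA : A.Nonempty) : N.cluster a ⊆ N.cluster b := by
  have hAab : A ⊆ N.cluster a ∩ N.cluster b := Set.subset_inter ha.1 hb.1
  obtain ⟨z, hz⟩ := hC _ ⟨a, rfl⟩ _ ⟨b, rfl⟩ (hA.mono hAab)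
  have hza : N.cluster z ⊆ N.cluster a := hz ▸ Set.inter_subset_left
  have hzb : N.cluster z ⊆ N.cluster b := hz ▸ Set.inter_subset_right
  rcases (hPCC z a).mpr (.inl hza) with h | h
  · exact (cluster_subset_of_reach h).trans hzb
  · exact ha.2 z (hz ▸ hAab) h ▸ hzb

theorem lcaNetwork_of_isClosedCS (hPCC : N.PCC) (hC : IsClosedCS N.CS) : N.LcaNetwork :=
  fun A hA =>
  Set.exists_eq_singleton_iff_nonempty_subsingleton.mpr
    ⟨N.LCA_nonempty A, fun _ ha _ hb =>
      hPCC.eq_of_mem_LCA_of_cluster_subset ha hb (hPCC.cluster_subset_of_mem_LCA hC ha hb hA)⟩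

end PCC

end Network

theorem pcc_lcaNetwork_iff_closed_general (X : Type) (N : Network X)
    (hPCC : N.PCC) :
    N.LcaNetwork ↔ IsClosedCS N.CS :=
  ⟨Network.LcaNetwork.isClosedCS, hPCC.lcaNetwork_of_isClosedCS⟩

/-- A network satisfying (PCC) is an lca-network iff its clustering
system is closed. -/
theorem pcc_lcaNetwork_iff_closed (X : Type) [Fintype X] (N : Network X)
    (hPCC : N.PCC) :
    N.LcaNetwork ↔ IsClosedCS N.CS :=
  pcc_lcaNetwork_iff_closed_general X N hPCC

end PhyloNet
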